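/- Let f, g : X → Y be convexity-preserving maps from a sober L-convex space X to an S₀ L-convex space Y, and let Z = {x ∈ X : f(x) = g(x)} carry the subspace convex structure 𝒞(X)|_Z = {C|_Z : C ∈ 𝒞(X)}. Then Z is a sober L-convex space. -/
import Mathlib


/-- A commutative integral quantale: a complete lattice with a commutative
monoid structure whose unit is the top element and which distributes over
arbitrary joins; `res` is the residuum determined by adjointness. -/
class CIQuantale (L : Type*) extends CompleteLattice L, CommMonoid L where
  mul_sSup : ∀ (a : L) (S : Set L), a * sSup S = ⨆ b ∈ S, a * b
  one_eq_top : (1 : L) = ⊤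
  res : L → L → L
  res_adj : ∀ a b c : L, a * b ≤ c ↔ a ≤ res b c

open CIQuantale

variable {L : Type*} [CIQuantale L]

/-- The inclusion L-order `sub` on `L^X`. -/
def lsub {X : Type*} (A B : X → L) : L := ⨅ x, res (A x) (B x)

/-- Zadeh forward image. -/
def fimg {X Y : Type*} (f : X → Y) (A : X → L) : Y → L :=
  fun y => ⨆ x, ⨆ _ : f x = y, A x

/-- Zadeh preimage. -/
def fpre {X Y : Type*} (f : X → Y) (B : Y → L) : X → L := fun x => B (f x)

/-- `e` is an L-order. -/
def IsLOrder {P : Type*} (e : P → P → L) : Prop :=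
  (∀ x, e x x = 1) ∧ (∀ x y z, e x y * e y z ≤ e x z) ∧
  (∀ x y, e x y ⊓ e y x = 1 → x = y)

/-- `x₀` is a supremum of `A` (definition form). -/
def IsSupD {P : Type*} (e : P → P → L) (A : P → L) (x₀ : P) : Prop :=
  (∀ x, A x ≤ e x x₀) ∧ ∀ y, (⨅ x, res (A x) (e x y)) ≤ e x₀ y

/-- `x₀` is an infimum of `A` (definition form). -/
def IsInfD {P : Type*} (e : P → P → L) (A : P → L) (x₀ : P) : Prop :=
  (∀ x, A x ≤ e x₀ x) ∧ ∀ y, (⨅ x, res (A x) (e y x)) ≤ e y x₀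

/-- `x₀` is a supremum of `A` (characterization form). -/
def IsSupE {P : Type*} (e : P → P → L) (A : P → L) (x₀ : P) : Prop :=
  ∀ y, e x₀ y = ⨅ x, res (A x) (e x y)

/-- `x₀` is an infimum of `A` (characterization form). -/
def IsInfE {P : Type*} (e : P → P → L) (A : P → L) (x₀ : P) : Prop :=
  ∀ y, e y x₀ = ⨅ x, res (A x) (e y x)

/-- A stratified L-convex structure on `X`. -/
def IsConvexStruct {X : Type*} (𝒞 : Set (X → L)) : Prop :=
  ((fun _ => (⊥ : L)) ∈ 𝒞) ∧ ((fun _ => (⊤ : L)) ∈ 𝒞) ∧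
  (∀ D : Set (X → L), D ⊆ 𝒞 → D.Nonempty → DirectedOn (· ≤ ·) D →
    (fun x => ⨆ C ∈ D, C x) ∈ 𝒞) ∧
  (∀ D : Set (X → L), D ⊆ 𝒞 → (fun x => ⨅ C ∈ D, C x) ∈ 𝒞) ∧
  (∀ p : L, ∀ C ∈ 𝒞, (fun x => res p (C x)) ∈ 𝒞)

/-- The hull operator of the convex structure `𝒞`. -/
def hull {X : Type*} (𝒞 : Set (X → L)) (A : X → L) : X → L :=
  fun x => ⨅ C ∈ {C | C ∈ 𝒞 ∧ A ≤ C}, C x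

/-- Convexity-preserving maps. -/
def ConvPres {X Y : Type*} (𝒞X : Set (X → L)) (𝒞Y : Set (Y → L)) (f : X → Y) : Prop :=
  ∀ D ∈ 𝒞Y, fpre f D ∈ 𝒞X

/-- The characteristic function `1_x`. -/
def lchar {X : Type*} (x : X) : X → L := fun y => ⨆ _ : y = x, (1 : L)

/-- Algebraic irreducible convex sets. -/
def AlgIrr {X : Type*} (𝒞 : Set (X → L)) (F : X → L) : Prop :=
  F ∈ 𝒞 ∧ (⨆ x, F x) = 1 ∧
  ∀ D : Set (X → L), D ⊆ 𝒞 → D.Nonempty → DirectedOn (· ≤ ·) D →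
    lsub F (fun x => ⨆ C ∈ D, C x) = ⨆ C ∈ D, lsub F C

/-- Sober L-convex spaces (Liu–Yue). -/
def Sober {X : Type*} (𝒞 : Set (X → L)) : Prop :=
  ∀ F, AlgIrr 𝒞 F → ∃! a : X, F = hull 𝒞 (lchar a)

/-- The S₀ separation axiom (hull form). -/
def S0 {X : Type*} (𝒞 : Set (X → L)) : Prop :=
  ∀ x y : X, hull 𝒞 (lchar x) = hull 𝒞 (lchar y) → x = y

/-- The S₀ separation axiom (separation form). -/
def S0sep {X : Type*} (𝒞 : Set (X → L)) : Prop :=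
  ∀ x y : X, x ≠ y → ∃ C ∈ 𝒞, C x ≠ C y

/-- Homeomorphism of L-convex spaces. -/
def Homeo {A B : Type*} (𝒞A : Set (A → L)) (𝒞B : Set (B → L)) (h : A → B) : Prop :=
  Function.Bijective h ∧ ConvPres 𝒞A 𝒞B h ∧ ∀ C ∈ 𝒞A, fimg h C ∈ 𝒞B

/-! ### Auxiliary lemmas -/

lemma q_mul_iSup {ι : Sort*} (a : L) (h : ι → L) : a * ⨆ i, h i = ⨆ i, a * h i := by
  rw [iSup, mul_sSup a (Set.range h)]
  apply le_antisymm
  · apply iSup₂_le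
    rintro b ⟨i, rfl⟩
    exact le_iSup (fun i => a * h i) i
  · apply iSup_le
    intro i
    exact le_iSup₂_of_le (h i) ⟨i, rfl⟩ le_rfl

lemma q_mul_bot (a : L) : a * ⊥ = ⊥ := by
  have := mul_sSup a (∅ : Set L)
  simpa using this

lemma q_mul_le_left (c : L) {a b : L} (hab : a ≤ b) : c * a ≤ c * b := by
  have h1 : b = sSup ({a, b} : Set L) := by
    rw [sSup_pair]; exact (sup_eq_right.mpr hab).symm
  rw [h1, mul_sSup]
  exact le_iSup₂_of_le a (Set.mem_insert a {b}) le_rfl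

lemma q_res_bot (c : L) : res (⊥ : L) c = ⊤ := by
  apply top_unique
  exact (res_adj ⊤ ⊥ c).mp (by rw [q_mul_bot]; exact bot_le)

lemma q_res_one (c : L) : res (1 : L) c = c := by
  apply le_antisymm
  · have := (res_adj (res 1 c) 1 c).mpr le_rfl
    simpa using this
  · exact (res_adj c 1 c).mp (by simp)

lemma q_res_antitone {a b : L} (hab : a ≤ b) (c : L) : res b c ≤ res a c := by
  apply (res_adj _ _ _).mp
  calc res b c * a ≤ res b c * b := q_mul_le_left _ hab
    _ ≤ c := (res_adj _ _ _).mpr le_rfl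

lemma q_res_iSup {ι : Sort*} (h : ι → L) (c : L) :
    res (⨆ i, h i) c = ⨅ i, res (h i) c := by
  apply le_antisymm
  · exact le_iInf fun i => q_res_antitone (le_iSup h i) c
  · apply (res_adj _ _ _).mp
    rw [q_mul_iSup]
    exact iSup_le fun i => (res_adj _ _ _).mpr (iInf_le _ i)

lemma lsub_antitone {X : Type*} {A B : X → L} (hAB : A ≤ B) (C : X → L) :
    lsub B C ≤ lsub A C :=
  le_iInf fun x => le_trans (iInf_le _ x) (q_res_antitone (hAB x) _)

lemma hull_mem {X : Type*} {𝒞 : Set (X → L)} (h𝒞 : IsConvexStruct 𝒞) (A : X → L) :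
    hull 𝒞 A ∈ 𝒞 :=
  h𝒞.2.2.2.1 _ (fun _ hC => hC.1)

lemma le_hull {X : Type*} (𝒞 : Set (X → L)) (A : X → L) : A ≤ hull 𝒞 A :=
  fun x => le_iInf₂ fun _ hC => hC.2 x

lemma hull_le {X : Type*} {𝒞 : Set (X → L)} {A C : X → L} (hC : C ∈ 𝒞) (h : A ≤ C) :
    hull 𝒞 A ≤ C :=
  fun x => iInf₂_le C ⟨hC, h⟩

lemma lsub_hull {X : Type*} {𝒞 : Set (X → L)} (h𝒞 : IsConvexStruct 𝒞) (A : X → L)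
    {C : X → L} (hC : C ∈ 𝒞) : lsub (hull 𝒞 A) C = lsub A C := by
  apply le_antisymm
  · exact lsub_antitone (le_hull 𝒞 A) C
  · set p := lsub A C with hp
    have h1 : ∀ x, A x ≤ res p (C x) := by
      intro x
      apply (res_adj _ _ _).mp
      rw [mul_comm]
      exact (res_adj _ _ _).mpr (iInf_le _ x)
    have h2 : (fun x => res p (C x)) ∈ 𝒞 := h𝒞.2.2.2.2 p C hC
    have h3 : hull 𝒞 A ≤ fun x => res p (C x) := hull_le h2 h1
    apply le_iInf
    intro x
    apply (res_adj _ _ _).mp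
    rw [mul_comm]
    exact (res_adj _ _ _).mpr (h3 x)

lemma lchar_self {X : Type*} (a : X) : lchar (L := L) a a = 1 := by
  unfold lchar
  exact le_antisymm (iSup_le fun _ => le_rfl) (le_iSup (fun _ : a = a => (1 : L)) rfl)

lemma lchar_ne {X : Type*} {a x : X} (h : x ≠ a) : lchar (L := L) a x = ⊥ :=
  le_antisymm (iSup_le fun hx => absurd hx h) bot_le

lemma lchar_le_iff {X : Type*} (a : X) (D : X → L) : lchar a ≤ D ↔ D a = ⊤ := by
  constructor
  · intro h
    apply top_unique
    have := h a
    rw [lchar_self] at this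
    rw [← one_eq_top (L := L)]
    exact this
  · intro h x
    apply iSup_le
    rintro rfl
    rw [h]
    exact le_top

lemma hull_lchar_self {X : Type*} (𝒞 : Set (X → L)) (a : X) :
    hull 𝒞 (lchar a) a = ⊤ := by
  apply top_unique
  apply le_iInf₂
  intro C hC
  rw [← (lchar_le_iff a C).mp hC.2]

lemma lsub_lchar {X : Type*} (a : X) (C : X → L) : lsub (lchar a) C = C a := by
  apply le_antisymm
  · have h := iInf_le (fun x => res (lchar a x) (C x)) a
    rwa [lchar_self, q_res_one] at h
  · apply le_iInf
    intro x
    by_cases hx : x = a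
    · subst hx
      rw [lchar_self, q_res_one]
    · rw [lchar_ne hx, q_res_bot]
      exact le_top

lemma lsub_fimg {Z X : Type*} (i : Z → X) (F : Z → L) (C : X → L) :
    lsub (fimg i F) C = lsub F (fun z => C (i z)) := by
  unfold lsub fimg
  have h1 : ∀ x, res (⨆ z, ⨆ _ : i z = x, F z) (C x)
      = ⨅ z, ⨅ _ : i z = x, res (F z) (C x) := by
    intro x
    rw [q_res_iSup]
    exact iInf_congr fun z => q_res_iSup _ _
  simp only [h1]
  apply le_antisymm
  · apply le_iInf
    intro z
    calc (⨅ x, ⨅ z', ⨅ _ : i z' = x, res (F z') (C x))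
        ≤ ⨅ z', ⨅ _ : i z' = i z, res (F z') (C (i z)) := iInf_le _ (i z)
      _ ≤ ⨅ _ : i z = i z, res (F z) (C (i z)) := iInf_le _ z
      _ ≤ res (F z) (C (i z)) := iInf_le _ rfl
  · apply le_iInf; intro x
    apply le_iInf; intro z
    apply le_iInf; intro hz
    subst hz
    exact iInf_le _ z

theorem stmt13 {X Y : Type*} (𝒞X : Set (X → L)) (𝒞Y : Set (Y → L))
    (hX : IsConvexStruct 𝒞X) (hY : IsConvexStruct 𝒞Y)
    (f g : X → Y) (hf : ConvPres 𝒞X 𝒞Y f) (hg : ConvPres 𝒞X 𝒞Y g)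
    (hsX : Sober 𝒞X) (h0Y : S0 𝒞Y) :
    Sober {C : {x : X // f x = g x} → L | ∃ D ∈ 𝒞X, C = fun z => D z.1} := by
  set Z := {x : X // f x = g x}
  set 𝒞Z : Set (Z → L) := {C : Z → L | ∃ D ∈ 𝒞X, C = fun z => D z.1} with h𝒞Z
  intro F hF
  obtain ⟨hFmem, hFsup, hFdir⟩ := hF
  obtain ⟨D₀, hD₀mem, hFD₀⟩ := hFmem
  -- the pushforward of F along the inclusion, and its hull
  set A₀ : X → L := fimg (Subtype.val : Z → X) F with hA₀
  set F₀ : X → L := hull 𝒞X A₀ with hF₀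
  have hA₀F₀ : A₀ ≤ F₀ := le_hull 𝒞X A₀
  have hF₀mem : F₀ ∈ 𝒞X := hull_mem hX A₀
  -- key identity: for convex C in X, lsub F₀ C = lsub F (C restricted to Z)
  have hkey : ∀ C ∈ 𝒞X, lsub F₀ C = lsub F (fun z : Z => C z.1) := by
    intro C hC
    rw [hF₀, lsub_hull hX A₀ hC, hA₀, lsub_fimg]
  -- F₀ is algebraic irreducible in X
  have hF₀irr : AlgIrr 𝒞X F₀ := by
    refine ⟨hF₀mem, ?_, ?_⟩
    · apply le_antisymm
      · rw [one_eq_top (L := L)]; exact le_top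
      · rw [← hFsup]
        apply iSup_le
        intro z
        calc F z ≤ A₀ z.1 := by
              apply le_iSup_of_le z
              simp [hA₀, fimg]
          _ ≤ F₀ z.1 := hA₀F₀ z.1
          _ ≤ ⨆ x, F₀ x := le_iSup _ _
    · intro D hD hne hdir
      set D' : Set (Z → L) := (fun C : X → L => fun z : Z => C z.1) '' D with hD'
      have hD'sub : D' ⊆ 𝒞Z := by
        rintro _ ⟨C, hC, rfl⟩
        exact ⟨C, hD hC, rfl⟩
      have hD'ne : D'.Nonempty := hne.image _
      have hD'dir : DirectedOn (· ≤ ·) D' := by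
        rintro _ ⟨C₁, hC₁, rfl⟩ _ ⟨C₂, hC₂, rfl⟩
        obtain ⟨C₃, hC₃, h₁₃, h₂₃⟩ := hdir C₁ hC₁ C₂ hC₂
        exact ⟨fun z => C₃ z.1, ⟨C₃, hC₃, rfl⟩, fun z => h₁₃ z.1, fun z => h₂₃ z.1⟩
      have hsupmem : (fun x => ⨆ C ∈ D, C x) ∈ 𝒞X := hX.2.2.1 D hD hne hdir
      have h1 : lsub F₀ (fun x => ⨆ C ∈ D, C x)
          = lsub F (fun z : Z => ⨆ C ∈ D, C z.1) := hkey _ hsupmem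
      have h2 : (fun z : Z => ⨆ C ∈ D, C z.1) = (fun z : Z => ⨆ C' ∈ D', C' z) := by
        funext z
        rw [hD', iSup_image]
      have h3 : lsub F (fun z : Z => ⨆ C' ∈ D', C' z) = ⨆ C' ∈ D', lsub F C' :=
        hFdir D' hD'sub hD'ne hD'dir
      have h4 : (⨆ C' ∈ D', lsub F C') = ⨆ C ∈ D, lsub F₀ C := by
        rw [hD', iSup_image]
        apply iSup_congr; intro C
        apply iSup_congr; intro hC
        exact (hkey C (hD hC)).symm
      rw [h1, h2, h3, h4]
  -- get the sober point of F₀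
  obtain ⟨a, haF₀, hauniq⟩ := hsX F₀ hF₀irr
  -- C a = lsub F (C|Z) for every convex C in X
  have hCa : ∀ C ∈ 𝒞X, C a = lsub F (fun z : Z => C z.1) := by
    intro C hC
    rw [← hkey C hC, haF₀, lsub_hull hX _ hC, lsub_lchar]
  -- f a = g a
  have hfg : f a = g a := by
    apply h0Y
    have hE : ∀ E ∈ 𝒞Y, E (f a) = E (g a) := by
      intro E hE
      have h1 := hCa (fpre f E) (hf E hE)
      have h2 := hCa (fpre g E) (hg E hE)
      have h3 : (fun z : Z => fpre f E z.1) = (fun z : Z => fpre g E z.1) := by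
        funext z
        simp only [fpre, z.2]
      rw [h3] at h1
      exact h1.trans h2.symm
    have hset : {E | E ∈ 𝒞Y ∧ lchar (f a) ≤ E} = {E | E ∈ 𝒞Y ∧ lchar (g a) ≤ E} := by
      ext E
      simp only [Set.mem_setOf_eq]
      constructor
      · rintro ⟨h1, h2⟩
        exact ⟨h1, (lchar_le_iff _ _).mpr (by rw [← hE E h1]; exact (lchar_le_iff _ _).mp h2)⟩
      · rintro ⟨h1, h2⟩
        exact ⟨h1, (lchar_le_iff _ _).mpr (by rw [hE E h1]; exact (lchar_le_iff _ _).mp h2)⟩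
    unfold hull
    rw [hset]
  set z₀ : Z := ⟨a, hfg⟩ with hz₀
  -- F is the restriction of F₀
  have hFrestr : F = fun z : Z => F₀ z.1 := by
    have hle : ∀ z : Z, F z ≤ F₀ z.1 := by
      intro z
      refine le_trans ?_ (hA₀F₀ z.1)
      apply le_iSup_of_le z
      simp [hA₀, fimg]
    have hge : F₀ ≤ D₀ := by
      apply hull_le hD₀mem
      intro x
      apply iSup_le; intro z
      apply iSup_le; rintro rfl
      rw [hFD₀]
    funext z
    apply le_antisymm (hle z)
    calc F₀ z.1 ≤ D₀ z.1 := hge z.1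
      _ = F z := by rw [hFD₀]
  refine ⟨z₀, ?_, ?_⟩
  · -- existence: F = hull 𝒞Z (lchar z₀)
    funext z
    have hz : F z = F₀ z.1 := by rw [hFrestr]
    rw [hz, haF₀]
    apply le_antisymm
    · apply le_iInf₂
      rintro C' ⟨⟨D, hDmem, rfl⟩, hle'⟩
      have hDa : D a = ⊤ := (lchar_le_iff z₀ _).mp hle'
      exact iInf₂_le D ⟨hDmem, (lchar_le_iff a D).mpr hDa⟩
    · apply le_iInf₂
      rintro D ⟨hDmem, hle'⟩
      have hDa : D a = ⊤ := (lchar_le_iff a D).mp hle'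
      exact iInf₂_le (fun z : Z => D z.1) ⟨⟨D, hDmem, rfl⟩, (lchar_le_iff z₀ _).mpr hDa⟩
  · -- uniqueness
    intro z₁ hz₁
    have hFz₁ : F z₁ = ⊤ := by
      rw [hz₁]; exact hull_lchar_self 𝒞Z z₁
    have hset : {C | C ∈ 𝒞X ∧ A₀ ≤ C} = {C | C ∈ 𝒞X ∧ lchar z₁.1 ≤ C} := by
      ext D
      simp only [Set.mem_setOf_eq]
      constructor
      · rintro ⟨h1, h2⟩
        refine ⟨h1, (lchar_le_iff _ _).mpr (top_unique ?_)⟩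
        rw [← hFz₁]
        refine le_trans ?_ (h2 z₁.1)
        apply le_iSup_of_le z₁
        simp [hA₀, fimg]
      · rintro ⟨h1, h2⟩
        refine ⟨h1, ?_⟩
        intro x
        apply iSup_le; intro z
        apply iSup_le; rintro rfl
        have hDZ : (fun z : Z => D z.1) ∈ 𝒞Z := ⟨D, h1, rfl⟩
        have hlch : lchar z₁ ≤ fun z : Z => D z.1 := by
          apply (lchar_le_iff z₁ _).mpr
          exact (lchar_le_iff z₁.1 D).mp h2
        have := hull_le hDZ hlch
        rw [← hz₁] at this
        exact this z
    have hF₀b : F₀ = hull 𝒞X (lchar z₁.1) := by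
      funext x
      rw [hF₀]
      unfold hull
      rw [hset]
    have : z₁.1 = a := hauniq z₁.1 hF₀b
    exact Subtype.ext this
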